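/- At θ* with r_{θ*} = r*, the Hessian of the KL-regularized objective is ∇²_θ J(θ*) = -(1/β)·Cov_{y∼π_{θ*}}[∇_θ r*(y)], where Cov denotes the covariance matrix E[g g^T] - E[g]E[g]^T of the gradient vector g(y) = ∇_θ r_θ(y) evaluated at θ*. In particular ∇²_θ J(θ*) is negative semidefinite. -/

import Mathlib

open scoped BigOperators

/-!
Differentiating once, `∇J(θ) = ∑ y, (r*(y) - r_θ(y)) ∇π_θ(y)`: the extra `-β ∇π_θ(y)` coming from
`∇(π log π)` sums to `-β ∇(∑ y, π_θ(y)) = 0`. Differentiating again at `θ*`, the term carrying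
`∇²π_θ(y)` has the coefficient `r*(y) - r_{θ*}(y) = 0`, which leaves `-∑ y, ∇π ⊗ ∇r_{θ*}`. The score
identity `∇π = (π / β) ∇r` turns this into `-(1/β) E_π[∇r ⊗ ∇r]`, and it also gives
`E_π[∇r] = β ∑ y, ∇π = 0`, so this second moment is the covariance.
-/

section

variable {E : Type*} [NormedAddCommGroup E] [NormedSpace ℝ E]

theorem HasFDerivAt.log_div_const {f : E → ℝ} {f' : E →L[ℝ] ℝ} {x : E}
    (hf : HasFDerivAt f f' x) (hx : f x ≠ 0) {c : ℝ} (hc : c ≠ 0) :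
    HasFDerivAt (fun x => Real.log (f x / c)) ((f x)⁻¹ • f') x := by
  simp only [div_eq_mul_inv]
  convert (hf.mul_const c⁻¹).log (mul_ne_zero hx (inv_ne_zero hc)) using 1
  rw [smul_smul, mul_inv, inv_inv, mul_assoc, mul_inv_cancel₀ hc, mul_one]

theorem HasFDerivAt.mul_of_left_eq_zero {c d : E → ℝ} {c' : E →L[ℝ] ℝ} {x : E}
    (hc : HasFDerivAt c c' x) (hd : DifferentiableAt ℝ d x) (hcx : c x = 0) :
    HasFDerivAt (fun x => c x * d x) (d x • c') x := by
  simpa [hcx] using hc.fun_mul hd.hasFDerivAt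

variable {Y : Type*} {π : E → Y → ℝ} {πref r : Y → ℝ} {β : ℝ}

noncomputable def klReward (β : ℝ) (π : E → Y → ℝ) (πref : Y → ℝ) (θ : E) (y : Y) : ℝ :=
  β * Real.log (π θ y / πref y)

theorem hasFDerivAt_klReward {θ : E} {y : Y} (hπ : π θ y ≠ 0) (href : πref y ≠ 0)
    (hdiff : DifferentiableAt ℝ (fun θ' => π θ' y) θ) :
    HasFDerivAt (fun θ' => klReward β π πref θ' y)
      (β • (π θ y)⁻¹ • fderiv ℝ (fun θ' => π θ' y) θ) θ :=
  (hdiff.hasFDerivAt.log_div_const hπ href).const_mul β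

variable [Fintype Y]

theorem sum_fderiv_eq_zero_of_sum_eq_const {G : Type*} [NormedAddCommGroup G]
    [NormedSpace ℝ G] {F : Y → E → G} {c : G} {x : E} (hF : ∀ y, DifferentiableAt ℝ (F y) x)
    (hc : ∀ x', ∑ y, F y x' = c) : ∑ y, fderiv ℝ (F y) x = 0 := by
  rw [← fderiv_fun_sum fun y _ => hF y, funext hc, fderiv_const_apply]

noncomputable def klObjective (β : ℝ) (π : E → Y → ℝ) (πref r : Y → ℝ) (θ : E) : ℝ :=
  (∑ y, π θ y * r y) - β * ∑ y, π θ y * Real.log (π θ y / πref y)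

theorem hasFDerivAt_klObjective {θ : E} (hπ : ∀ y, π θ y ≠ 0)
    (href : ∀ y, πref y ≠ 0) (hsum : ∀ θ', ∑ y, π θ' y = 1)
    (hdiff : ∀ y, Differentiable ℝ (fun θ' => π θ' y)) :
    HasFDerivAt (klObjective β π πref r)
      (∑ y, (r y - klReward β π πref θ y) • fderiv ℝ (fun θ' => π θ' y) θ) θ := by
  have hP : ∀ y, HasFDerivAt (fun θ' => π θ' y) (fderiv ℝ (fun θ' => π θ' y) θ) θ :=
    fun y => (hdiff y θ).hasFDerivAt
  have hreward := HasFDerivAt.fun_sum (u := Finset.univ) fun y _ => (hP y).mul_const (r y)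
  have hkl := HasFDerivAt.fun_sum (u := Finset.univ) fun y _ =>
    (hP y).fun_mul ((hP y).log_div_const (hπ y) (href y))
  have hsumP : ∑ y, fderiv ℝ (fun θ' => π θ' y) θ = 0 :=
    sum_fderiv_eq_zero_of_sum_eq_const (fun y => hdiff y θ) hsum
  refine (hreward.sub (hkl.const_mul β)).congr_fderiv ?_
  simp only [smul_smul, mul_inv_cancel₀ (hπ _), one_smul, Finset.sum_add_distrib, hsumP,
    zero_add, Finset.smul_sum, ← Finset.sum_sub_distrib, sub_smul, klReward]

theorem hasFDerivAt_fderiv_klObjective_apply {θ : E} (v : E) (hπ : ∀ θ y, π θ y ≠ 0)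
    (href : ∀ y, πref y ≠ 0) (hsum : ∀ θ', ∑ y, π θ' y = 1)
    (hdiff : ∀ y, ContDiff ℝ 2 (fun θ' => π θ' y))
    (hr : ∀ y, klReward β π πref θ y = r y) :
    HasFDerivAt (fun θ' => fderiv ℝ (klObjective β π πref r) θ' v)
      (-∑ y, fderiv ℝ (fun θ' => π θ' y) θ v • fderiv ℝ (fun θ' => klReward β π πref θ' y) θ)
      θ := by
  have hdiff₁ y : Differentiable ℝ (fun θ' => π θ' y) := (hdiff y).differentiable two_ne_zero
  have hgrad : (fun θ' => fderiv ℝ (klObjective β π πref r) θ' v) = fun θ' =>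
      ∑ y, (r y - klReward β π πref θ' y) * fderiv ℝ (fun θ'' => π θ'' y) θ' v := by
    funext θ'
    rw [(hasFDerivAt_klObjective (hπ θ') href hsum hdiff₁).fderiv]
    simp only [sum_apply, smul_apply, smul_eq_mul]
  rw [hgrad, ← Finset.sum_neg_distrib]
  refine HasFDerivAt.fun_sum fun y _ => ?_
  rw [← smul_neg]
  have hreward :=
    (hasFDerivAt_klReward (β := β) (hπ θ y) (href y) (hdiff₁ y θ)).differentiableAt
  have hdirectional : DifferentiableAt ℝ (fun θ' => fderiv ℝ (fun θ'' => π θ'' y) θ' v) θ :=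
    (((hdiff y).fderiv_right (m := 1) le_rfl).differentiable one_ne_zero θ).clm_apply
      (differentiableAt_const v)
  exact (hreward.hasFDerivAt.const_sub (r y)).mul_of_left_eq_zero hdirectional
    (sub_eq_zero.mpr (hr y).symm)

end

/-- Hessian of the KL-regularized objective at the optimum: at `θ*` with `r_{θ*} = r*`,
`∇²_θ J(θ*) = -(1/β)·Cov_{y∼π_{θ*}}[∇_θ r*(y)]` (as a bilinear form), and in particular
the Hessian is negative semidefinite. -/
theorem objective_hessian_at_optimum (d : ℕ) {Y : Type*} [Fintype Y]
    (π : (Fin d → ℝ) → Y → ℝ) (πref : Y → ℝ) (rstar : Y → ℝ) (β : ℝ) (hβ : 0 < β)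
    (hpos : ∀ θ y, 0 < π θ y) (hrefpos : ∀ y, 0 < πref y)
    (hsum : ∀ θ, ∑ y, π θ y = 1)
    (hdiff : ∀ y, ContDiff ℝ 2 (fun θ => π θ y))
    (θstar : Fin d → ℝ)
    (hstar : ∀ y : Y, β * Real.log (π θstar y / πref y) = rstar y)
    (J : (Fin d → ℝ) → ℝ)
    (hJ : J = fun θ' => (∑ y : Y, π θ' y * rstar y) -
        β * ∑ y : Y, π θ' y * Real.log (π θ' y / πref y))
    (Dr : Y → (Fin d → ℝ) →L[ℝ] ℝ)
    (hDr : ∀ y, Dr y = fderiv ℝ (fun θ' => β * Real.log (π θ' y / πref y)) θstar) :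
    (∀ u v : Fin d → ℝ,
      fderiv ℝ (fun θ' => (fderiv ℝ J θ') v) θstar u =
        -(1 / β) *
          ((∑ y : Y, π θstar y * (Dr y u * Dr y v)) -
            (∑ y : Y, π θstar y * Dr y u) * (∑ y : Y, π θstar y * Dr y v))) ∧
    (∀ u : Fin d → ℝ,
      fderiv ℝ (fun θ' => (fderiv ℝ J θ') u) θstar u ≤ 0) := by
  have hπ θ y : π θ y ≠ 0 := (hpos θ y).ne'
  have href y : πref y ≠ 0 := (hrefpos y).ne'
  have hdiff₁ y : Differentiable ℝ (fun θ => π θ y) := (hdiff y).differentiable two_ne_zero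
  have hDr' y : Dr y = fderiv ℝ (fun θ => klReward β π πref θ y) θstar := hDr y
  have hscore y : fderiv ℝ (fun θ => π θ y) θstar = (π θstar y / β) • Dr y := by
    rw [hDr', (hasFDerivAt_klReward (hπ θstar y) (href y) (hdiff₁ y θstar)).fderiv, smul_smul,
      smul_smul, show π θstar y / β * β * (π θstar y)⁻¹ = 1 by field_simp [hπ θstar y, hβ.ne'],
      one_smul]
  have hmean u : ∑ y, π θstar y * Dr y u = 0 := by
    have := congrArg (fun L => β * L u)
      (sum_fderiv_eq_zero_of_sum_eq_const (fun y => hdiff₁ y θstar) hsum)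
    simpa [hscore, Finset.mul_sum, ← mul_assoc, mul_div_cancel₀, hβ.ne'] using this
  have hHess u v : fderiv ℝ (fun θ' => fderiv ℝ J θ' v) θstar u =
      -(1 / β) * ∑ y, π θstar y * (Dr y u * Dr y v) := by
    have hJ' : J = klObjective β π πref rstar := hJ
    rw [hJ', (hasFDerivAt_fderiv_klObjective_apply v hπ href hsum hdiff hstar).fderiv]
    simp only [← hDr', hscore, neg_apply, sum_apply, smul_apply, smul_eq_mul, Finset.mul_sum,
      ← Finset.sum_neg_distrib]
    exact Finset.sum_congr rfl fun y _ => by ring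
  refine ⟨fun u v => by rw [hHess, hmean, hmean]; ring, fun u => ?_⟩
  rw [hHess]
  exact mul_nonpos_of_nonpos_of_nonneg (by simp [hβ.le])
    (Finset.sum_nonneg fun y _ => mul_nonneg (hpos θstar y).le (mul_self_nonneg _))
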